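/- arXiv:2105.10635 — 2 statements merged into one kernel-verified Lean document; each statement's English description precedes it below -/
import Mathlib

section
/- As ε → ∞, the unique minimizer P_ε of the entropic regularized OT problem converges to the product coupling a bᵀ. -/
/-!
Testing optimality of `P_ε` against the product coupling `Q = a bᵀ` gives
`ε (H(Q) - H(P_ε)) ≤ ⟨Q - P_ε, C⟩ ≤ 2 ∑ |C|`. Because `log Q` splits into row and column
parts, `H(Q) - H(P_ε)` is the Kullback–Leibler divergence `KL(P_ε ‖ Q)`, which dominates the
squared Hellinger distance `∑ (√P_ε - √Q)²`. Hence `√P_ε → √Q` entrywise at rate `ε^{-1/2}`,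
and so `P_ε → Q`.
-/

noncomputable def matEntropy {n m : ℕ} (P : Matrix (Fin n) (Fin m) ℝ) : ℝ :=
  -∑ i, ∑ j, P i j * Real.log (P i j)

def couplings {n m : ℕ} (a : Fin n → ℝ) (b : Fin m → ℝ) :
    Set (Matrix (Fin n) (Fin m) ℝ) :=
  {P | (∀ i j, 0 ≤ P i j) ∧ (∀ i, ∑ j, P i j = a i) ∧ (∀ j, ∑ i, P i j = b j)}

open Filter Topology Real

/-- Generalized Kullback–Leibler divergence; the `- P + Q` terms make it nonnegative even when
`P` and `Q` have different total mass. -/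
noncomputable def matKL {ι κ : Type*} [Fintype ι] [Fintype κ] (P Q : Matrix ι κ ℝ) : ℝ :=
  ∑ i, ∑ j, (P i j * log (P i j) - P i j * log (Q i j) - P i j + Q i j)

lemma sq_sqrt_sub_sqrt_le {p q : ℝ} (hp : 0 ≤ p) (hq : 0 < q) :
    (√p - √q) ^ 2 ≤ p * log p - p * log q - p + q := by
  rcases hp.eq_or_lt with rfl | hp
  · simp [Real.sq_sqrt hq.le]
  set x := √p
  set y := √q
  have hx : 0 < x := Real.sqrt_pos.2 hp
  have hy : 0 < y := Real.sqrt_pos.2 hq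
  have hlog : x * (log y - log x) ≤ y - x := by
    have := Real.log_le_sub_one_of_pos (div_pos hy hx)
    rw [Real.log_div hy.ne' hx.ne'] at this
    calc x * (log y - log x) ≤ x * (y / x - 1) := mul_le_mul_of_nonneg_left this hx.le
      _ = y - x := by field_simp
  have hp' : p = x ^ 2 := (Real.sq_sqrt hp.le).symm
  have hq' : q = y ^ 2 := (Real.sq_sqrt hq.le).symm
  rw [hp', hq', Real.log_pow, Real.log_pow]
  push_cast
  nlinarith [mul_le_mul_of_nonneg_left hlog hx.le]

lemma sq_sqrt_sub_sqrt_le_matKL {ι κ : Type*} [Fintype ι] [Fintype κ] {P Q : Matrix ι κ ℝ}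
    (hP : ∀ i j, 0 ≤ P i j) (hQ : ∀ i j, 0 < Q i j) (i : ι) (j : κ) :
    (√(P i j) - √(Q i j)) ^ 2 ≤ matKL P Q := by
  have hterm : ∀ i j, 0 ≤ P i j * log (P i j) - P i j * log (Q i j) - P i j + Q i j :=
    fun i j => (sq_nonneg _).trans (sq_sqrt_sub_sqrt_le (hP i j) (hQ i j))
  calc (√(P i j) - √(Q i j)) ^ 2
      ≤ P i j * log (P i j) - P i j * log (Q i j) - P i j + Q i j :=
        sq_sqrt_sub_sqrt_le (hP i j) (hQ i j)
    _ ≤ ∑ j, (P i j * log (P i j) - P i j * log (Q i j) - P i j + Q i j) :=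
        Finset.single_le_sum (fun j _ => hterm i j) (Finset.mem_univ j)
    _ ≤ matKL P Q :=
        Finset.single_le_sum (fun i _ => Finset.sum_nonneg fun j _ => hterm i j)
          (Finset.mem_univ i)

section Couplings

variable {n m : ℕ} {a : Fin n → ℝ} {b : Fin m → ℝ} {P : Matrix (Fin n) (Fin m) ℝ}

lemma le_one_of_mem_couplings (ha1 : ∑ i, a i = 1) (hP : P ∈ couplings a b) (i : Fin n)
    (j : Fin m) : P i j ≤ 1 := by
  obtain ⟨hP0, hrow, -⟩ := hP
  calc P i j ≤ ∑ j, P i j := Finset.single_le_sum (fun j _ => hP0 i j) (Finset.mem_univ j)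
    _ = a i := hrow i
    _ ≤ ∑ i, a i := Finset.single_le_sum
        (fun i _ => hrow i ▸ Finset.sum_nonneg fun j _ => hP0 i j) (Finset.mem_univ i)
    _ = 1 := ha1

lemma abs_sum_mul_le_of_mem_couplings (ha1 : ∑ i, a i = 1) (hP : P ∈ couplings a b)
    (C : Matrix (Fin n) (Fin m) ℝ) : |∑ i, ∑ j, P i j * C i j| ≤ ∑ i, ∑ j, |C i j| := by
  refine (Finset.abs_sum_le_sum_abs _ _).trans <| Finset.sum_le_sum fun i _ =>
    (Finset.abs_sum_le_sum_abs _ _).trans <| Finset.sum_le_sum fun j _ => ?_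
  rw [abs_mul, abs_of_nonneg (hP.1 i j)]
  exact mul_le_of_le_one_left (abs_nonneg _) (le_one_of_mem_couplings ha1 hP i j)

lemma outer_mem_couplings (ha0 : ∀ i, 0 ≤ a i) (hb0 : ∀ j, 0 ≤ b j) (ha1 : ∑ i, a i = 1)
    (hb1 : ∑ j, b j = 1) :
    (fun i j => a i * b j : Matrix (Fin n) (Fin m) ℝ) ∈ couplings a b :=
  ⟨fun i j => mul_nonneg (ha0 i) (hb0 j),
    fun i => by rw [← Finset.mul_sum, hb1, mul_one],
    fun j => by rw [← Finset.sum_mul, ha1, one_mul]⟩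

lemma sum_mul_log_outer_of_mem_couplings (ha0 : ∀ i, 0 < a i) (hb0 : ∀ j, 0 < b j)
    (hP : P ∈ couplings a b) :
    ∑ i, ∑ j, P i j * log (a i * b j) = ∑ i, a i * log (a i) + ∑ j, b j * log (b j) := by
  obtain ⟨-, hrow, hcol⟩ := hP
  simp only [Real.log_mul (ha0 _).ne' (hb0 _).ne', mul_add, Finset.sum_add_distrib]
  rw [Finset.sum_comm (f := fun i j => P i j * log (b j))]
  simp only [← Finset.sum_mul, hrow, hcol]

lemma matEntropy_outer_sub_matEntropy (ha0 : ∀ i, 0 < a i) (hb0 : ∀ j, 0 < b j)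
    (ha1 : ∑ i, a i = 1) (hb1 : ∑ j, b j = 1) (hP : P ∈ couplings a b) :
    matEntropy (fun i j => a i * b j : Matrix (Fin n) (Fin m) ℝ) - matEntropy P =
      matKL P (fun i j => a i * b j) := by
  have hQ := outer_mem_couplings (fun i => (ha0 i).le) (fun j => (hb0 j).le) ha1 hb1
  have hmass : ∀ {R : Matrix (Fin n) (Fin m) ℝ}, R ∈ couplings a b → ∑ i, ∑ j, R i j = 1 :=
    fun hR => by rw [Finset.sum_congr rfl fun i _ => hR.2.1 i, ha1]
  have hPlog := sum_mul_log_outer_of_mem_couplings ha0 hb0 hP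
  have hQlog := sum_mul_log_outer_of_mem_couplings ha0 hb0 hQ
  have hPm := hmass hP
  have hQm := hmass hQ
  simp only [matEntropy, matKL, Finset.sum_add_distrib, Finset.sum_sub_distrib] at *
  linarith

lemma mul_matKL_outer_le (ha0 : ∀ i, 0 < a i) (hb0 : ∀ j, 0 < b j) (ha1 : ∑ i, a i = 1)
    (hb1 : ∑ j, b j = 1) (C : Matrix (Fin n) (Fin m) ℝ) {ε : ℝ} (hP : P ∈ couplings a b)
    (hle : (∑ i, ∑ j, P i j * C i j) - ε * matEntropy P ≤
      (∑ i, ∑ j, a i * b j * C i j) - ε * matEntropy (fun i j => a i * b j)) :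
    ε * matKL P (fun i j => a i * b j) ≤ 2 * ∑ i, ∑ j, |C i j| := by
  have hQ := outer_mem_couplings (fun i => (ha0 i).le) (fun j => (hb0 j).le) ha1 hb1
  have hPC := abs_le.1 (abs_sum_mul_le_of_mem_couplings ha1 hP C)
  have hQC := abs_le.1 (abs_sum_mul_le_of_mem_couplings ha1 hQ C)
  rw [← matEntropy_outer_sub_matEntropy ha0 hb0 ha1 hb1 hP]
  linarith [hPC.1, hQC.2]

end Couplings

lemma tendsto_atTop_of_sq_sub_le_div {f : ℝ → ℝ} {x c : ℝ}
    (h : ∀ ε > 0, (f ε - x) ^ 2 ≤ c / ε) : Tendsto f atTop (𝓝 x) := by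
  rw [tendsto_iff_dist_tendsto_zero]
  refine squeeze_zero' (Eventually.of_forall fun _ => dist_nonneg) ?_
    (by simpa using (tendsto_const_nhds (x := c)).div_atTop tendsto_id |>.sqrt)
  filter_upwards [eventually_gt_atTop 0] with ε hε
  exact Real.abs_le_sqrt (h ε hε)

/-- As ε → ∞, the unique minimizer P_ε of the entropic regularized OT problem converges
    to the product coupling a bᵀ. -/
theorem entropic_ot_limit_at_top (n m : ℕ) (a : Fin n → ℝ) (b : Fin m → ℝ)
    (C : Matrix (Fin n) (Fin m) ℝ)
    (ha0 : ∀ i, 0 < a i) (hb0 : ∀ j, 0 < b j)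
    (ha1 : ∑ i, a i = 1) (hb1 : ∑ j, b j = 1)
    (P : ℝ → Matrix (Fin n) (Fin m) ℝ)
    (hmin : ∀ ε > 0, P ε ∈ couplings a b ∧
      ∀ Q ∈ couplings a b, Q ≠ P ε →
        (∑ i, ∑ j, (P ε) i j * C i j) - ε * matEntropy (P ε) <
          (∑ i, ∑ j, Q i j * C i j) - ε * matEntropy Q) :
    Filter.Tendsto P Filter.atTop
      (nhds (fun i j => a i * b j : Matrix (Fin n) (Fin m) ℝ)) := by
  set Q : Matrix (Fin n) (Fin m) ℝ := fun i j => a i * b j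
  have hQ0 : ∀ i j, 0 < Q i j := fun i j => mul_pos (ha0 i) (hb0 j)
  have hQ := outer_mem_couplings (fun i => (ha0 i).le) (fun j => (hb0 j).le) ha1 hb1
  have hsqrt : ∀ i j, Tendsto (fun ε => √(P ε i j)) atTop (𝓝 √(Q i j)) := by
    refine fun i j =>
      tendsto_atTop_of_sq_sub_le_div (c := 2 * ∑ i, ∑ j, |C i j|) fun ε hε => ?_
    obtain ⟨hP, hopt⟩ := hmin ε hε
    have hle : (∑ i, ∑ j, P ε i j * C i j) - ε * matEntropy (P ε) ≤
        (∑ i, ∑ j, Q i j * C i j) - ε * matEntropy Q := by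
      rcases eq_or_ne Q (P ε) with h | h
      · rw [h]
      · exact (hopt Q hQ h).le
    rw [le_div_iff₀ hε, mul_comm]
    exact (mul_le_mul_of_nonneg_left (sq_sqrt_sub_sqrt_le_matKL hP.1 hQ0 i j) hε.le).trans
      (mul_matKL_outer_le ha0 hb0 ha1 hb1 C hP hle)
  refine tendsto_pi_nhds.2 fun i => tendsto_pi_nhds.2 fun j => ?_
  have hsq := (hsqrt i j).pow 2
  rw [Real.sq_sqrt (hQ0 i j).le] at hsq
  refine hsq.congr' ?_
  filter_upwards [eventually_gt_atTop 0] with ε hε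
  exact Real.sq_sqrt ((hmin ε hε).1.1 i j)
end

section
/- As ε → 0⁺, the unique minimizer P_ε of the entropic regularized OT problem converges to the element of maximal entropy within the set of optimal solutions of the unregularized OT problem; in particular ⟨P_ε, C⟩ → L_C(a,b). -/
open Filter Topology Set

section PenalizedMinimizers

variable {E : Type*} {K : Set E} {f H : E → ℝ} {P : ℝ → E} {L : ℝ} {x : E}

lemma le_of_isMinOn_sub_mul {ε : ℝ} {p : E} (hε : 0 < ε) (hp : p ∈ K)
    (hmin : IsMinOn (fun y => f y - ε * H y) K p) (hL : ∀ y ∈ K, L ≤ f y) (hx : x ∈ K)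
    (hfx : f x = L) : H x ≤ H p := by
  have hcompare := isMinOn_iff.1 hmin x hx
  have hlow := hL p hp
  nlinarith

variable [TopologicalSpace E]

lemma tendsto_value_of_isMinOn_sub_mul (hK : IsCompact K) (hH : Continuous H)
    (hP : ∀ ε > 0, P ε ∈ K ∧ IsMinOn (fun y => f y - ε * H y) K (P ε))
    (hL : ∀ y ∈ K, L ≤ f y) (hx : x ∈ K) (hfx : f x = L) :
    Tendsto (fun ε => f (P ε)) (𝓝[>] 0) (𝓝 L) := by
  obtain ⟨B, hB⟩ := hK.bddAbove_image hH.continuousOn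
  have hupper : ∀ ε > 0, f (P ε) ≤ L + ε * (B - H x) := fun ε hε => by
    have hcompare := isMinOn_iff.1 (hP ε hε).2 x hx
    have hbound : H (P ε) ≤ B := hB (mem_image_of_mem H (hP ε hε).1)
    nlinarith
  have hlim : Tendsto (fun ε : ℝ => L + ε * (B - H x)) (𝓝[>] 0) (𝓝 L) :=
    tendsto_nhdsWithin_of_tendsto_nhds (Continuous.tendsto' (by fun_prop) 0 L (by simp))
  refine tendsto_of_tendsto_of_tendsto_of_le_of_le' tendsto_const_nhds hlim ?_ ?_ <;>
    filter_upwards [self_mem_nhdsWithin] with ε hε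
  exacts [hL _ (hP ε hε).1, hupper ε hε]

lemma mapClusterPt_of_isMinOn_sub_mul [T2Space E] (hK : IsCompact K) (hf : Continuous f)
    (hH : Continuous H) (hP : ∀ ε > 0, P ε ∈ K ∧ IsMinOn (fun y => f y - ε * H y) K (P ε))
    (hL : ∀ y ∈ K, L ≤ f y) (hx : x ∈ K) (hfx : f x = L) {y : E}
    (hy : MapClusterPt y (𝓝[>] 0) P) : y ∈ K ∧ f y = L ∧ H x ≤ H y := by
  have hPK : ∀ᶠ ε in 𝓝[>] 0, P ε ∈ K := by
    filter_upwards [self_mem_nhdsWithin] with ε hε using (hP ε hε).1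
  refine ⟨hK.isClosed.mem_of_mapClusterPt hy hPK, ?_, ?_⟩
  · by_contra hne
    have hvalue := tendsto_value_of_isMinOn_sub_mul hK hH hP hL hx hfx
    exact ((hy.continuousAt_comp hf.continuousAt).clusterPt.mono hvalue).ne
      (disjoint_nhds_nhds.2 hne).eq_bot
  · refine isClosed_Ici.mem_of_mapClusterPt (hy.continuousAt_comp hH.continuousAt) ?_
    filter_upwards [self_mem_nhdsWithin] with ε hε
    exact le_of_isMinOn_sub_mul hε (hP ε hε).1 (hP ε hε).2 hL hx hfx

theorem tendsto_of_isMinOn_sub_mul [T2Space E] (hK : IsCompact K) (hf : Continuous f)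
    (hH : Continuous H) (hP : ∀ ε > 0, P ε ∈ K ∧ IsMinOn (fun y => f y - ε * H y) K (P ε))
    (hL : ∀ y ∈ K, L ≤ f y) (hx : x ∈ K) (hfx : f x = L)
    (huniq : ∀ y ∈ K, f y = L → H x ≤ H y → y = x) :
    Tendsto P (𝓝[>] 0) (𝓝 x) := by
  refine hK.tendsto_nhds_of_unique_mapClusterPt ?_ fun y _ hy => ?_
  · filter_upwards [self_mem_nhdsWithin] with ε hε using (hP ε hε).1
  · obtain ⟨hyK, hfy, hHy⟩ := mapClusterPt_of_isMinOn_sub_mul hK hf hH hP hL hx hfx hy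
    exact huniq y hyK hfy hHy

end PenalizedMinimizers

section Couplings

variable {n m : ℕ}

lemma isClosed_couplings (a : Fin n → ℝ) (b : Fin m → ℝ) : IsClosed (couplings a b) := by
  simp only [couplings, ofPred_and, ofPred_forall]
  exact (isClosed_iInter fun i => isClosed_iInter fun j =>
      isClosed_le continuous_const (by fun_prop)).inter
    ((isClosed_iInter fun i => isClosed_eq (by fun_prop) continuous_const).inter
      (isClosed_iInter fun j => isClosed_eq (by fun_prop) continuous_const))

lemma isCompact_couplings (a : Fin n → ℝ) (b : Fin m → ℝ) : IsCompact (couplings a b) := by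
  refine (isCompact_univ_pi fun i => isCompact_univ_pi fun _ => isCompact_Icc (a := 0) (b := a i))
    |>.of_isClosed_subset (isClosed_couplings a b) ?_
  rintro P ⟨hP0, hrow, -⟩ i - j -
  exact ⟨hP0 i j, hrow i ▸ Finset.single_le_sum (fun k _ => hP0 i k) (Finset.mem_univ j)⟩

lemma convex_couplings (a : Fin n → ℝ) (b : Fin m → ℝ) : Convex ℝ (couplings a b) := by
  rintro X ⟨hX0, hXrow, hXcol⟩ Y ⟨hY0, hYrow, hYcol⟩ s t hs ht hst
  refine ⟨fun i j => ?_, fun i => ?_, fun j => ?_⟩ <;>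
    simp only [Matrix.add_apply, Matrix.smul_apply, smul_eq_mul]
  · exact add_nonneg (mul_nonneg hs (hX0 i j)) (mul_nonneg ht (hY0 i j))
  · rw [Finset.sum_add_distrib, ← Finset.mul_sum, ← Finset.mul_sum, hXrow i, hYrow i,
      ← add_mul, hst, one_mul]
  · rw [Finset.sum_add_distrib, ← Finset.mul_sum, ← Finset.mul_sum, hXcol j, hYcol j,
      ← add_mul, hst, one_mul]

lemma isLinearMap_sum_mul_apply (C : Matrix (Fin n) (Fin m) ℝ) :
    IsLinearMap ℝ fun P : Matrix (Fin n) (Fin m) ℝ => ∑ i, ∑ j, P i j * C i j where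
  map_add P Q := by simp only [Matrix.add_apply, add_mul, Finset.sum_add_distrib]
  map_smul c P := by simp only [Matrix.smul_apply, smul_eq_mul, mul_assoc, Finset.mul_sum]

end Couplings

lemma strictConcaveOn_sum_apply {ι E : Type*} [Fintype ι] [AddCommMonoid E] [Module ℝ E]
    {s : Set E} {g : E → ℝ} (hg : StrictConcaveOn ℝ s g) :
    StrictConcaveOn ℝ (univ.pi fun _ : ι => s) fun x => ∑ i, g (x i) := by
  refine ⟨convex_pi fun _ _ => hg.1, fun x hx y hy hxy a b ha hb hab => ?_⟩
  obtain ⟨i₀, hi₀⟩ := Function.ne_iff.1 hxy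
  simp only [smul_eq_mul, Finset.mul_sum, ← Finset.sum_add_distrib]
  exact Finset.sum_lt_sum
    (fun i _ => hg.concaveOn.2 (hx i trivial) (hy i trivial) ha.le hb.le hab)
    ⟨i₀, Finset.mem_univ _, hg.2 (hx i₀ trivial) (hy i₀ trivial) hi₀ ha hb hab⟩

section Entropy

variable {n m : ℕ}

lemma matEntropy_eq_sum_negMulLog (P : Matrix (Fin n) (Fin m) ℝ) :
    matEntropy P = ∑ i, ∑ j, Real.negMulLog (P i j) := by
  simp only [matEntropy, Real.negMulLog, neg_mul, Finset.sum_neg_distrib]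

lemma continuous_matEntropy : Continuous (matEntropy : Matrix (Fin n) (Fin m) ℝ → ℝ) := by
  simp only [funext matEntropy_eq_sum_negMulLog]
  fun_prop

lemma strictConcaveOn_matEntropy :
    StrictConcaveOn ℝ {P : Matrix (Fin n) (Fin m) ℝ | ∀ i j, 0 ≤ P i j} matEntropy := by
  have hset : {P : Matrix (Fin n) (Fin m) ℝ | ∀ i j, 0 ≤ P i j} =
      univ.pi fun _ => univ.pi fun _ => Ici (0 : ℝ) := by
    ext P
    exact ⟨fun hP i _ j _ => hP i j, fun hP i j => hP i trivial j trivial⟩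
  rw [hset, funext matEntropy_eq_sum_negMulLog]
  exact strictConcaveOn_sum_apply (strictConcaveOn_sum_apply Real.strictConcaveOn_negMulLog)

end Entropy

theorem entropic_ot_limit_at_zero_general (n m : ℕ) (a : Fin n → ℝ) (b : Fin m → ℝ)
    (C : Matrix (Fin n) (Fin m) ℝ) (L : ℝ)
    (hL : IsLeast {x : ℝ | ∃ P ∈ couplings a b, x = ∑ i, ∑ j, P i j * C i j} L)
    (P : ℝ → Matrix (Fin n) (Fin m) ℝ)
    (hmin : ∀ ε > 0, P ε ∈ couplings a b ∧
      ∀ Q ∈ couplings a b, Q ≠ P ε →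
        (∑ i, ∑ j, (P ε) i j * C i j) - ε * matEntropy (P ε) <
          (∑ i, ∑ j, Q i j * C i j) - ε * matEntropy Q) :
    ∃ Pstar ∈ couplings a b,
      (∑ i, ∑ j, Pstar i j * C i j) = L ∧
      (∀ Q ∈ couplings a b, (∑ i, ∑ j, Q i j * C i j) = L →
        matEntropy Q ≤ matEntropy Pstar) ∧
      Filter.Tendsto P (nhdsWithin 0 (Set.Ioi 0)) (nhds Pstar) ∧
      Filter.Tendsto (fun ε => ∑ i, ∑ j, (P ε) i j * C i j)
        (nhdsWithin 0 (Set.Ioi 0)) (nhds L) := by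
  set cost : Matrix (Fin n) (Fin m) ℝ → ℝ := fun Q => ∑ i, ∑ j, Q i j * C i j
  have hcost : Continuous cost := by fun_prop
  have hLK : ∀ Q ∈ couplings a b, L ≤ cost Q := fun Q hQ => hL.2 ⟨Q, hQ, rfl⟩
  have hP (ε : ℝ) (hε : 0 < ε) : P ε ∈ couplings a b ∧
      IsMinOn (fun Q => cost Q - ε * matEntropy Q) (couplings a b) (P ε) :=
    ⟨(hmin ε hε).1, isMinOn_iff.2 fun Q hQ => (eq_or_ne Q (P ε)).elim (fun h => h ▸ le_rfl)
      fun h => ((hmin ε hε).2 Q hQ h).le⟩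
  obtain ⟨P₀, hP₀, hP₀L⟩ := hL.1
  obtain ⟨Pstar, hPstar, hmax⟩ := ((isCompact_couplings a b).inter_right
      (isClosed_eq hcost continuous_const)).exists_isMaxOn ⟨P₀, hP₀, hP₀L.symm⟩
      continuous_matEntropy.continuousOn
  have huniq (Q) (hQ : Q ∈ couplings a b) (hQL : cost Q = L)
      (hle : matEntropy Pstar ≤ matEntropy Q) : Q = Pstar :=
    (strictConcaveOn_matEntropy.subset (fun R hR => hR.1.1) ((convex_couplings a b).inter
      (convex_hyperplane (isLinearMap_sum_mul_apply C) L))).eq_of_isMaxOn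
      (fun R hR => (hmax hR).trans hle) hmax ⟨hQ, hQL⟩ hPstar
  exact ⟨Pstar, hPstar.1, hPstar.2, fun Q hQ hQL => hmax ⟨hQ, hQL⟩,
    tendsto_of_isMinOn_sub_mul (isCompact_couplings a b) hcost continuous_matEntropy hP hLK
      hPstar.1 hPstar.2 huniq,
    tendsto_value_of_isMinOn_sub_mul (f := cost) (isCompact_couplings a b) continuous_matEntropy
      hP hLK hPstar.1 hPstar.2⟩

/-- As ε → 0⁺, the unique minimizer P_ε of the entropic regularized OT problem converges
    to the maximal-entropy element of the set S of optimal solutions of the unregularized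
    OT problem; in particular ⟨P_ε, C⟩ → L_C(a,b). -/
theorem entropic_ot_limit_at_zero (n m : ℕ) (a : Fin n → ℝ) (b : Fin m → ℝ)
    (C : Matrix (Fin n) (Fin m) ℝ) (L : ℝ)
    (ha0 : ∀ i, 0 < a i) (hb0 : ∀ j, 0 < b j)
    (ha1 : ∑ i, a i = 1) (hb1 : ∑ j, b j = 1)
    (hL : IsLeast {x : ℝ | ∃ P ∈ couplings a b, x = ∑ i, ∑ j, P i j * C i j} L)
    (P : ℝ → Matrix (Fin n) (Fin m) ℝ)
    (hmin : ∀ ε > 0, P ε ∈ couplings a b ∧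
      ∀ Q ∈ couplings a b, Q ≠ P ε →
        (∑ i, ∑ j, (P ε) i j * C i j) - ε * matEntropy (P ε) <
          (∑ i, ∑ j, Q i j * C i j) - ε * matEntropy Q) :
    ∃ Pstar ∈ couplings a b,
      (∑ i, ∑ j, Pstar i j * C i j) = L ∧
      (∀ Q ∈ couplings a b, (∑ i, ∑ j, Q i j * C i j) = L →
        matEntropy Q ≤ matEntropy Pstar) ∧
      Filter.Tendsto P (nhdsWithin 0 (Set.Ioi 0)) (nhds Pstar) ∧
      Filter.Tendsto (fun ε => ∑ i, ∑ j, (P ε) i j * C i j)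
        (nhdsWithin 0 (Set.Ioi 0)) (nhds L) :=
  entropic_ot_limit_at_zero_general n m a b C L hL P hmin
end
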